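/- arXiv:1905.03762 — 2 statements merged into one kernel-verified Lean document; each statement's English description precedes it below -/
import Mathlib

section
/- Let L be a partial group which is the internal semidirect product of a partial subgroup X with a partial subgroup N. Suppose S_X is a subgroup of X and T is a subgroup of N such that S_X ⊆ N_L(T). Then S_X T = {Π(s,t) : s ∈ S_X, t ∈ T} is a subgroup of L, which is the (group-theoretic) semidirect product of S_X with T; in particular, if S_X and T are p-groups, then S_X T is a p-group, and if S_X is a maximal p-subgroup of X and T is a maximal p-subgroup of N, then S_X T is a maximal p-subgroup of L. -/
universe u v

/-- A partial group: a set `L` with a domain `D ⊆ W(L)` of words, a (total extension of the)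
partial product `Pi`, and an involutory inversion, satisfying axioms (PG1)-(PG4).
The value of `Pi` outside `D` is irrelevant. -/
structure PartialGroup (L : Type u) : Type u where
  D : Set (List L)
  Pi : List L → L
  inv : L → L
  inv_inv : ∀ g, inv (inv g) = g
  singleton_mem : ∀ g, [g] ∈ D
  append_left_mem : ∀ {u v : List L}, u ++ v ∈ D → u ∈ D
  append_right_mem : ∀ {u v : List L}, u ++ v ∈ D → v ∈ D
  Pi_singleton : ∀ g, Pi [g] = g
  pg3_mem : ∀ u v w : List L, u ++ v ++ w ∈ D → u ++ [Pi v] ++ w ∈ D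
  pg3_eq : ∀ u v w : List L, u ++ v ++ w ∈ D → Pi (u ++ v ++ w) = Pi (u ++ [Pi v] ++ w)
  pg4_mem : ∀ w ∈ D, (List.map inv w).reverse ++ w ∈ D
  pg4_eq : ∀ w ∈ D, Pi ((List.map inv w).reverse ++ w) = Pi []

namespace PartialGroup

variable {L : Type u} {L' : Type v}

/-- Inversion of a word: `(g_1,...,g_k)⁻¹ = (g_k⁻¹,...,g_1⁻¹)`. -/
def wInv (P : PartialGroup L) (w : List L) : List L := (w.map P.inv).reverse

/-- The identity `1 = Π(∅)`. -/
def one (P : PartialGroup L) : L := P.Pi []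

/-- Conjugation `x^g = Π(g⁻¹, x, g)`. -/
def cnj (P : PartialGroup L) (g x : L) : L := P.Pi [P.inv g, x, g]

/-- `x ∈ D(g)`, i.e. `(g⁻¹, x, g) ∈ D(L)`. -/
def memD (P : PartialGroup L) (g x : L) : Prop := [P.inv g, x, g] ∈ P.D

/-- `H` is a partial subgroup of `L`. -/
def IsPartialSubgroup (P : PartialGroup L) (H : Set L) : Prop :=
  H.Nonempty ∧ (∀ g ∈ H, P.inv g ∈ H) ∧ ∀ w ∈ P.D, (∀ x ∈ w, x ∈ H) → P.Pi w ∈ H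

/-- `N` is a partial normal subgroup of `L`. -/
def IsPartialNormal (P : PartialGroup L) (N : Set L) : Prop :=
  P.IsPartialSubgroup N ∧ ∀ g : L, ∀ n ∈ N, P.memD g n → P.cnj g n ∈ N

/-- `H` is a subgroup of `L`: a partial subgroup with `W(H) ⊆ D(L)`. -/
def IsSubgroup (P : PartialGroup L) (H : Set L) : Prop :=
  P.IsPartialSubgroup H ∧ ∀ w : List L, (∀ x ∈ w, x ∈ H) → w ∈ P.D

/-- Homomorphism of partial groups. -/
def IsHom (P : PartialGroup L) (P' : PartialGroup L') (φ : L → L') : Prop :=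
  ∀ w ∈ P.D, w.map φ ∈ P'.D ∧ φ (P.Pi w) = P'.Pi (w.map φ)

/-- Isomorphism of partial groups: a bijective homomorphism with `D(L)^φ = D(L')`. -/
def IsIso (P : PartialGroup L) (P' : PartialGroup L') (φ : L → L') : Prop :=
  Function.Bijective φ ∧ P.IsHom P' φ ∧ List.map φ '' P.D = P'.D

end PartialGroup

open PartialGroup

/-- For a list of pairs `((x₁,n₁),...,(xₖ,nₖ))` (with `xᵢ ∈ X`, `nᵢ ∈ N`), the word
`w_N = (n₁^{Π(x₂,...,xₖ)}, n₂^{Π(x₃,...,xₖ)}, ..., nₖ)`. -/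
def sdn {L : Type u} (P : PartialGroup L) : List (L × L) → List L
  | [] => []
  | q :: rest => P.cnj (P.Pi (rest.map Prod.fst)) q.2 :: sdn P rest

/-- `L` is the internal semidirect product of the partial subgroup `X` with the partial
subgroup `N`: axioms (SD1), (SD2), (SD3). -/
structure IsIntSemidirect {L : Type u} (P : PartialGroup L) (X N : Set L) : Prop where
  subX : P.IsPartialSubgroup X
  subN : P.IsPartialSubgroup N
  sd1 : ∀ x ∈ X, (∀ n ∈ N, P.memD x n) ∧ P.cnj x '' N = N
  sd2 : ∀ g : L, ∃! q : L × L, q.1 ∈ X ∧ q.2 ∈ N ∧ [q.1, q.2] ∈ P.D ∧ g = P.Pi [q.1, q.2]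
  sd3 : ∀ q : List (L × L), (∀ r ∈ q, r.1 ∈ X ∧ r.2 ∈ N) →
      ((q.map fun r => P.Pi [r.1, r.2]) ∈ P.D ↔
        q.map Prod.fst ∈ P.D ∧ sdn P q ∈ P.D) ∧
      ((q.map fun r => P.Pi [r.1, r.2]) ∈ P.D →
        P.Pi (q.map fun r => P.Pi [r.1, r.2]) =
          P.Pi [P.Pi (q.map Prod.fst), P.Pi (sdn P q)])

open PartialGroup

/-- `H` is a `p`-subgroup: a subgroup whose cardinality is a power of `p`. -/
def IsPSub {L : Type u} (p : ℕ) (P : PartialGroup L) (H : Set L) : Prop :=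
  P.IsSubgroup H ∧ ∃ k : ℕ, Nat.card H = p ^ k

/-- `H` is a maximal `p`-subgroup among subsets of `A`. -/
def IsMaxPSubIn {L : Type u} (p : ℕ) (P : PartialGroup L) (A H : Set L) : Prop :=
  H ⊆ A ∧ IsPSub p P H ∧ ∀ K : Set L, K ⊆ A → IsPSub p P K → H ⊆ K → K = H

/-- The normalizer `N_L(Q) = {g : Q ⊆ D(g), Q^g = Q}`. -/
def NL {L : Type u} (P : PartialGroup L) (Q : Set L) : Set L :=
  {g | (∀ x ∈ Q, P.memD g x) ∧ P.cnj g '' Q = Q}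

/-- `Dvia P Δ w Q` means `w ∈ D(L)_Δ` via a chain `Q = P₀, P₁, ..., Pₖ` with
`P_{i-1} ⊆ D(gᵢ)`, `P_{i-1}^{gᵢ} = Pᵢ`, and all `Pᵢ ∈ Δ`. -/
def Dvia {L : Type u} (P : PartialGroup L) (Δ : Set (Set L)) : List L → Set L → Prop
  | [], Q => Q ∈ Δ
  | g :: gs, Q => Q ∈ Δ ∧ (∀ x ∈ Q, P.memD g x) ∧ Dvia P Δ gs (P.cnj g '' Q)

/-- `(L, Δ, S)` is a locality: `S` is a maximal `p`-subgroup of `L`, `Δ` is a nonempty set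
of subgroups of `S` with `D(L) = D(L)_Δ`, closed under `L`-conjugation and overgroups in `S`. -/
def IsLocality {L : Type u} (p : ℕ) (P : PartialGroup L) (Δ : Set (Set L)) (S : Set L) : Prop :=
  IsMaxPSubIn p P Set.univ S ∧ Δ.Nonempty ∧ (∀ Q ∈ Δ, P.IsSubgroup Q ∧ Q ⊆ S) ∧
  P.D = {w | ∃ Q, Dvia P Δ w Q} ∧
  (∀ Q ∈ Δ, ∀ g : L, (∀ x ∈ Q, P.memD g x) → P.cnj g '' Q ∈ Δ) ∧
  ∀ Q ∈ Δ, ∀ R : Set L, Q ⊆ R → R ⊆ S → P.IsSubgroup R → R ∈ Δ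

namespace Stmt17Aux
open PartialGroup

variable {L : Type u} (P : PartialGroup L)

lemma nil_mem (g : L) : ([] : List L) ∈ P.D := by
  have h : [g] ++ ([] : List L) ∈ P.D := by simpa using P.singleton_mem g
  exact P.append_right_mem h

lemma append_pair {u v : List L} (huv : u ++ v ∈ P.D) :
    [P.Pi u, P.Pi v] ∈ P.D ∧ P.Pi (u ++ v) = P.Pi [P.Pi u, P.Pi v] := by
  have h1 := P.pg3_mem [] u v (by simpa using huv)
  have e1 := P.pg3_eq [] u v (by simpa using huv)
  have h2 := P.pg3_mem [P.Pi u] v [] (by simpa using h1)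
  have e2 := P.pg3_eq [P.Pi u] v [] (by simpa using h1)
  refine ⟨by simpa using h2, ?_⟩
  simp only [List.nil_append, List.append_nil, List.cons_append, List.singleton_append] at e1 e2 ⊢
  exact e1.trans e2

lemma inv_mul_mem (g : L) : [P.inv g, g] ∈ P.D := by
  simpa using P.pg4_mem [g] (P.singleton_mem g)

lemma inv_mul_eq (g : L) : P.Pi [P.inv g, g] = P.one := by
  simpa [PartialGroup.one] using P.pg4_eq [g] (P.singleton_mem g)

lemma pi_one_cons {w : List L} (hw : w ∈ P.D) :
    (P.one :: w) ∈ P.D ∧ P.Pi (P.one :: w) = P.Pi w := by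
  have h1 := P.pg3_mem [] [] w (by simpa using hw)
  have e1 := P.pg3_eq [] [] w (by simpa using hw)
  exact ⟨by simpa [PartialGroup.one] using h1, by simpa [PartialGroup.one] using e1.symm⟩

lemma pi_append_one {w : List L} (hw : w ∈ P.D) :
    (w ++ [P.one]) ∈ P.D ∧ P.Pi (w ++ [P.one]) = P.Pi w := by
  have h1 := P.pg3_mem w [] [] (by simpa using hw)
  have e1 := P.pg3_eq w [] [] (by simpa using hw)
  exact ⟨by simpa [PartialGroup.one] using h1, by simpa [PartialGroup.one] using e1.symm⟩

lemma pi_pair_one (g : L) : [g, P.one] ∈ P.D ∧ P.Pi [g, P.one] = g := by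
  have h := pi_append_one P (P.singleton_mem g)
  constructor
  · simpa using h.1
  · have := h.2
    simpa [P.Pi_singleton] using this

lemma pi_one_pair (g : L) : [P.one, g] ∈ P.D ∧ P.Pi [P.one, g] = g := by
  have h := pi_one_cons P (P.singleton_mem g)
  exact ⟨h.1, by simpa [P.Pi_singleton] using h.2⟩

lemma pi_pair_one_one : P.Pi [P.one, P.one] = P.one := (pi_one_pair P P.one).2

lemma eq_inv_of_pi_eq_one {g k : L} (hD : [g, k] ∈ P.D) (he : P.Pi [g, k] = P.one) :
    k = P.inv g := by
  have h4 := P.pg4_mem [g, k] hD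
  have h3 : [P.inv g, g, k] ∈ P.D := by
    have : [P.inv k] ++ [P.inv g, g, k] ∈ P.D := by simpa using h4
    exact P.append_right_mem this
  have e1 := P.pg3_eq [P.inv g] [g, k] [] (by simpa using h3)
  have e2 := P.pg3_eq [] [P.inv g, g] [k] (by simpa using h3)
  simp only [List.nil_append, List.append_nil, List.cons_append, List.singleton_append] at e1 e2
  rw [he] at e1
  rw [inv_mul_eq] at e2
  have e1' : P.Pi [P.inv g, g, k] = P.inv g := by
    rw [e1, (pi_pair_one P (P.inv g)).2]
  have e2' : P.Pi [P.inv g, g, k] = k := by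
    have hk : [k] ∈ P.D := P.singleton_mem k
    rw [e2]
    exact (pi_one_pair P k).2
  rw [← e1', e2']

lemma wInv_wInv (w : List L) : P.wInv (P.wInv w) = w := by
  simp [PartialGroup.wInv, List.map_reverse, List.map_map, Function.comp_def, P.inv_inv]

lemma inv_pi {w : List L} (hw : w ∈ P.D) : P.inv (P.Pi w) = P.Pi (P.wInv w) := by
  have h1 : P.wInv w ++ w ∈ P.D := P.pg4_mem w hw
  have h2 : P.wInv w ∈ P.D := P.append_left_mem h1
  have h3 : P.wInv (P.wInv w) ++ P.wInv w ∈ P.D := P.pg4_mem _ h2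
  have e3 : P.Pi (P.wInv (P.wInv w) ++ P.wInv w) = P.one := P.pg4_eq _ h2
  rw [wInv_wInv] at h3 e3
  have hap := append_pair P h3
  have : P.Pi [P.Pi w, P.Pi (P.wInv w)] = P.one := by rw [← hap.2]; exact e3
  exact (eq_inv_of_pi_eq_one P hap.1 this).symm

lemma pi_triple {a b c : L} (h3 : [a, b, c] ∈ P.D) :
    [P.Pi [a, b], c] ∈ P.D ∧ [a, P.Pi [b, c]] ∈ P.D ∧
    P.Pi [a, b, c] = P.Pi [P.Pi [a, b], c] ∧ P.Pi [a, b, c] = P.Pi [a, P.Pi [b, c]] := by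
  have h1 := append_pair P (u := [a, b]) (v := [c]) (by simpa using h3)
  have h2 := append_pair P (u := [a]) (v := [b, c]) (by simpa using h3)
  rw [P.Pi_singleton] at h1 h2
  exact ⟨h1.1, h2.1, by simpa using h1.2, by simpa using h2.2⟩

lemma pi_inv_cancel_left {a b : L} (hab : [a, b] ∈ P.D) :
    P.Pi [P.inv a, P.Pi [a, b]] = b := by
  have h4 := P.pg4_mem [a, b] hab
  have h5 : [P.inv a, a, b] ∈ P.D := by
    have : [P.inv b] ++ [P.inv a, a, b] ∈ P.D := by simpa using h4
    exact P.append_right_mem this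
  have e1 := P.pg3_eq [P.inv a] [a, b] [] (by simpa using h5)
  have e2 := P.pg3_eq [] [P.inv a, a] [b] (by simpa using h5)
  simp only [List.nil_append, List.append_nil, List.cons_append, List.singleton_append] at e1 e2
  rw [inv_mul_eq] at e2
  rw [← e1, e2]
  exact (pi_one_pair P b).2

end Stmt17Aux
namespace Stmt17Aux
open PartialGroup

variable {L : Type u} {P : PartialGroup L} {X N : Set L}

lemma one_mem_psub {H : Set L} (hH : P.IsPartialSubgroup H) : P.one ∈ H := by
  obtain ⟨⟨g, hg⟩, hinv, hcl⟩ := hH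
  have hm : P.Pi [P.inv g, g] ∈ H := by
    refine hcl [P.inv g, g] (inv_mul_mem P g) ?_
    intro x hx
    simp only [List.mem_cons, List.not_mem_nil, or_false] at hx
    rcases hx with rfl | rfl
    · exact hinv g hg
    · exact hg
  rwa [inv_mul_eq] at hm

lemma pair_mem_D (h : IsIntSemidirect P X N) {x n : L} (hx : x ∈ X) (hn : n ∈ N) :
    [x, n] ∈ P.D := by
  obtain ⟨n', hn', he⟩ : n ∈ P.cnj x '' N := by rw [(h.sd1 x hx).2]; exact hn
  have hd : [P.inv x, n', x] ∈ P.D := (h.sd1 x hx).1 n' hn'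
  have h4 := P.pg4_mem _ hd
  have h5 : [x, P.inv x, n', x] ∈ P.D := by
    have h4' : [P.inv x, P.inv n'] ++ [x, P.inv x, n', x] ∈ P.D := by
      simpa [P.inv_inv] using h4
    exact P.append_right_mem h4'
  have h6 := P.pg3_mem [x] [P.inv x, n', x] [] (by simpa using h5)
  rw [← he]
  simpa [PartialGroup.cnj] using h6

/-- The unique decomposition `g = Π(x, n)` with `x ∈ X`, `n ∈ N`. -/
noncomputable def dec (h : IsIntSemidirect P X N) (g : L) : L × L :=
  Classical.choose (h.sd2 g).exists

lemma dec_spec (h : IsIntSemidirect P X N) (g : L) :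
    (dec h g).1 ∈ X ∧ (dec h g).2 ∈ N ∧ [(dec h g).1, (dec h g).2] ∈ P.D ∧
      g = P.Pi [(dec h g).1, (dec h g).2] :=
  Classical.choose_spec (h.sd2 g).exists

lemma dec_eq (h : IsIntSemidirect P X N) {g x n : L} (hx : x ∈ X) (hn : n ∈ N)
    (he : g = P.Pi [x, n]) : dec h g = (x, n) := by
  obtain ⟨q, _, huniq⟩ := h.sd2 g
  have h1 := huniq (x, n) ⟨hx, hn, pair_mem_D h hx hn, he⟩
  have h2 := huniq (dec h g) (dec_spec h g)
  rw [h2, h1]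

lemma dec_of_X (h : IsIntSemidirect P X N) {x : L} (hx : x ∈ X) : dec h x = (x, P.one) :=
  dec_eq h hx (one_mem_psub h.subN) (pi_pair_one P x).2.symm

lemma dec_of_N (h : IsIntSemidirect P X N) {n : L} (hn : n ∈ N) : dec h n = (P.one, n) :=
  dec_eq h (one_mem_psub h.subX) hn (pi_one_pair P n).2.symm

lemma sdn_mem (B : Set L) : ∀ q : List (L × L), (∀ r ∈ q, r.2 ∈ B) →
    (∀ u v : List L, q.map Prod.fst = u ++ v → ∀ b ∈ B, P.cnj (P.Pi v) b ∈ B) →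
    ∀ y ∈ sdn P q, y ∈ B := by
  intro q
  induction q with
  | nil => intro _ _ y hy; simp [sdn] at hy
  | cons r rest ih =>
    intro hq hsuf y hy
    simp only [sdn, List.mem_cons] at hy
    rcases hy with rfl | hy
    · exact hsuf [r.1] (rest.map Prod.fst) (by simp) r.2 (hq r (by simp))
    · refine ih (fun r' hr' => hq r' (by simp [hr'])) ?_ y hy
      intro u v huv
      exact hsuf (r.1 :: u) v (by simp [huv])

lemma cnj_mem_N (h : IsIntSemidirect P X N) {x n : L} (hx : x ∈ X) (hn : n ∈ N) :
    P.cnj x n ∈ N := by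
  have := (h.sd1 x hx).2
  rw [← this]
  exact Set.mem_image_of_mem _ hn

lemma dec_pi (h : IsIntSemidirect P X N) (w : List L) (hw : w ∈ P.D) :
    (w.map (dec h)).map Prod.fst ∈ P.D ∧ sdn P (w.map (dec h)) ∈ P.D ∧
    dec h (P.Pi w) =
      (P.Pi ((w.map (dec h)).map Prod.fst), P.Pi (sdn P (w.map (dec h)))) := by
  set q := w.map (dec h) with hqdef
  have hq : ∀ r ∈ q, r.1 ∈ X ∧ r.2 ∈ N := by
    intro r hr
    rw [hqdef] at hr
    obtain ⟨g, _, rfl⟩ := List.mem_map.mp hr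
    exact ⟨(dec_spec h g).1, (dec_spec h g).2.1⟩
  have hmapq : q.map (fun r => P.Pi [r.1, r.2]) = w := by
    rw [hqdef, List.map_map]
    conv_rhs => rw [← List.map_id w]
    refine List.map_congr_left ?_
    intro g _
    exact ((dec_spec h g).2.2.2).symm
  obtain ⟨hiff, heq⟩ := h.sd3 q hq
  have hwq : q.map (fun r => P.Pi [r.1, r.2]) ∈ P.D := by rw [hmapq]; exact hw
  obtain ⟨hfst, hsdn⟩ := hiff.mp hwq
  have hfstX : ∀ x ∈ q.map Prod.fst, x ∈ X := by
    intro x hx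
    obtain ⟨r, hr, rfl⟩ := List.mem_map.mp hx
    exact (hq r hr).1
  have hPiFst : P.Pi (q.map Prod.fst) ∈ X := h.subX.2.2 _ hfst hfstX
  have hsdnN : ∀ y ∈ sdn P q, y ∈ N := by
    refine sdn_mem N q (fun r hr => (hq r hr).2) ?_
    intro u v huv b hb
    have hvD : v ∈ P.D := P.append_right_mem (huv ▸ hfst)
    have hvX : P.Pi v ∈ X := by
      refine h.subX.2.2 _ hvD ?_
      intro x hx
      exact hfstX x (huv ▸ (List.mem_append.mpr (Or.inr hx)))
    exact cnj_mem_N h hvX hb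
  have hPiSdn : P.Pi (sdn P q) ∈ N := h.subN.2.2 _ hsdn hsdnN
  have hde : dec h (P.Pi w) = (P.Pi (q.map Prod.fst), P.Pi (sdn P q)) := by
    refine dec_eq h hPiFst hPiSdn ?_
    rw [← hmapq]
    exact heq hwq
  exact ⟨hfst, hsdn, hde⟩

lemma dec_inv (h : IsIntSemidirect P X N) (g : L) :
    dec h (P.inv g) =
      (P.inv (dec h g).1, P.cnj (P.inv (dec h g).1) (P.inv (dec h g).2)) := by
  obtain ⟨hx, hn, hD, he⟩ := dec_spec h g
  set x := (dec h g).1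
  set n := (dec h g).2
  have hxi : P.inv x ∈ X := h.subX.2.1 x hx
  have hni : P.inv n ∈ N := h.subN.2.1 n hn
  have hcnjN : P.cnj (P.inv x) (P.inv n) ∈ N := cnj_mem_N h hxi hni
  refine dec_eq h hxi hcnjN ?_
  -- the identity: inv g = Π[x⁻¹, (n⁻¹)^(x⁻¹)]
  have hd0 : [P.inv (P.inv x), P.inv n, P.inv x] ∈ P.D := (h.sd1 _ hxi).1 _ hni
  have hd : [x, P.inv n, P.inv x] ∈ P.D := by rwa [P.inv_inv] at hd0
  have h4 := P.pg4_mem _ hd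
  -- [x, n, x⁻¹, x, n⁻¹, x⁻¹] ∈ D
  have h5 : [P.inv x, x, P.inv n, P.inv x] ∈ P.D := by
    have h4' : [x, n] ++ [P.inv x, x, P.inv n, P.inv x] ∈ P.D := by
      simpa [P.inv_inv] using h4
    exact P.append_right_mem h4'
  have e1 := P.pg3_eq [P.inv x] [x, P.inv n, P.inv x] [] (by simpa using h5)
  have e2 := P.pg3_eq [] [P.inv x, x] [P.inv n, P.inv x] (by simpa using h5)
  simp only [List.nil_append, List.append_nil, List.cons_append, List.singleton_append] at e1 e2
  rw [inv_mul_eq] at e2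
  have h6 : [P.inv n, P.inv x] ∈ P.D := by
    have h5' : [P.inv x, x] ++ [P.inv n, P.inv x] ∈ P.D := by simpa using h5
    exact P.append_right_mem h5'
  have e2' : P.Pi [P.inv x, x, P.inv n, P.inv x] = P.Pi [P.inv n, P.inv x] := by
    rw [e2]; exact (pi_one_cons P h6).2
  have einv : P.inv g = P.Pi [P.inv n, P.inv x] := by
    rw [he, inv_pi P hD]
    simp [PartialGroup.wInv]
  rw [einv, ← e2', e1]
  simp [PartialGroup.cnj, P.inv_inv]

end Stmt17Aux
namespace Stmt17Aux
open PartialGroup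

variable {L : Type u} {P : PartialGroup L} {X N : Set L}

lemma mem_pair {K : Set L} {a b : L} (ha : a ∈ K) (hb : b ∈ K) : ∀ x ∈ [a, b], x ∈ K := by
  intro x hx
  simp only [List.mem_cons, List.not_mem_nil, or_false] at hx
  rcases hx with rfl | rfl <;> assumption

lemma mem_triple {K : Set L} {a b c : L} (ha : a ∈ K) (hb : b ∈ K) (hc : c ∈ K) :
    ∀ x ∈ [a, b, c], x ∈ K := by
  intro x hx
  simp only [List.mem_cons, List.not_mem_nil, or_false] at hx
  rcases hx with rfl | rfl | rfl <;> assumption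

/-- A subgroup of a partial group is a group. -/
def grpOf {K : Set L} (hK : P.IsSubgroup K) : Group ↥K where
  mul a b := ⟨P.Pi [a.1, b.1], hK.1.2.2 _ (hK.2 _ (mem_pair a.2 b.2)) (mem_pair a.2 b.2)⟩
  one := ⟨P.one, one_mem_psub hK.1⟩
  inv a := ⟨P.inv a.1, hK.1.2.1 _ a.2⟩
  mul_assoc a b c := Subtype.ext (by
    have h3 : [a.1, b.1, c.1] ∈ P.D := hK.2 _ (mem_triple a.2 b.2 c.2)
    have ht := pi_triple P h3
    exact ht.2.2.1.symm.trans ht.2.2.2)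
  one_mul a := Subtype.ext (pi_one_pair P a.1).2
  mul_one a := Subtype.ext (pi_pair_one P a.1).2
  inv_mul_cancel a := Subtype.ext (inv_mul_eq P a.1)

lemma exists_preimage_word (f : L → L) (K : Set L) :
    ∀ xs : List L, (∀ x ∈ xs, x ∈ f '' K) →
      ∃ ws : List L, (∀ g ∈ ws, g ∈ K) ∧ ws.map f = xs := by
  intro xs
  induction xs with
  | nil => exact fun _ => ⟨[], by simp, rfl⟩
  | cons x xs ih =>
    intro hx
    obtain ⟨ws, hws, hmap⟩ := ih (fun y hy => hx y (by simp [hy]))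
    obtain ⟨g, hg, hgx⟩ := hx x (by simp)
    refine ⟨g :: ws, ?_, by simp [hmap, hgx]⟩
    intro g' hg'
    simp only [List.mem_cons] at hg'
    rcases hg' with rfl | hg'
    · exact hg
    · exact hws g' hg'

section ST

variable (h : IsIntSemidirect P X N) {SX T : Set L}
  (hSX : P.IsSubgroup SX) (hSXX : SX ⊆ X) (hT : P.IsSubgroup T) (hTN : T ⊆ N)
  (hnorm : ∀ s ∈ SX, (∀ t ∈ T, P.memD s t) ∧ P.cnj s '' T = T)
set_option linter.unusedSectionVars false
include h hSX hSXX hT hTN hnorm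

lemma SX_subset_ST : SX ⊆ {g | ∃ s ∈ SX, ∃ t ∈ T, g = P.Pi [s, t]} := by
  intro s hs
  exact ⟨s, hs, P.one, one_mem_psub hT.1, (pi_pair_one P s).2.symm⟩

lemma T_subset_ST : T ⊆ {g | ∃ s ∈ SX, ∃ t ∈ T, g = P.Pi [s, t]} := by
  intro t ht
  exact ⟨P.one, one_mem_psub hSX.1, t, ht, (pi_one_pair P t).2.symm⟩

lemma dec_mem_ST {g : L} (hg : g ∈ {g | ∃ s ∈ SX, ∃ t ∈ T, g = P.Pi [s, t]}) :
    (dec h g).1 ∈ SX ∧ (dec h g).2 ∈ T := by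
  obtain ⟨s, hs, t, ht, rfl⟩ := hg
  rw [dec_eq h (hSXX hs) (hTN ht) rfl]
  exact ⟨hs, ht⟩

lemma ST_word (w : List L) (hw : ∀ g ∈ w, g ∈ {g | ∃ s ∈ SX, ∃ t ∈ T, g = P.Pi [s, t]}) :
    w ∈ P.D ∧ (dec h (P.Pi w)).1 ∈ SX ∧ (dec h (P.Pi w)).2 ∈ T := by
  set q := w.map (dec h) with hqdef
  have hqST : ∀ r ∈ q, r.1 ∈ SX ∧ r.2 ∈ T := by
    intro r hr
    rw [hqdef] at hr
    obtain ⟨g, hg, rfl⟩ := List.mem_map.mp hr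
    exact dec_mem_ST h hSX hSXX hT hTN hnorm (hw g hg)
  have hq : ∀ r ∈ q, r.1 ∈ X ∧ r.2 ∈ N :=
    fun r hr => ⟨hSXX (hqST r hr).1, hTN (hqST r hr).2⟩
  have hmapq : q.map (fun r => P.Pi [r.1, r.2]) = w := by
    rw [hqdef, List.map_map]
    conv_rhs => rw [← List.map_id w]
    exact List.map_congr_left fun g _ => ((dec_spec h g).2.2.2).symm
  have hfstSX : ∀ x ∈ q.map Prod.fst, x ∈ SX := by
    intro x hx
    obtain ⟨r, hr, rfl⟩ := List.mem_map.mp hx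
    exact (hqST r hr).1
  have hfst : q.map Prod.fst ∈ P.D := hSX.2 _ hfstSX
  have hsdnT : ∀ y ∈ sdn P q, y ∈ T := by
    refine sdn_mem T q (fun r hr => (hqST r hr).2) ?_
    intro u v huv b hb
    have hvSX : ∀ x ∈ v, x ∈ SX :=
      fun x hx => hfstSX x (huv ▸ List.mem_append.mpr (Or.inr hx))
    have hPiv : P.Pi v ∈ SX := hSX.1.2.2 _ (hSX.2 _ hvSX) hvSX
    have := (hnorm _ hPiv).2
    rw [← this]
    exact Set.mem_image_of_mem _ hb
  have hsdnD : sdn P q ∈ P.D := hT.2 _ hsdnT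
  obtain ⟨hiff, heq⟩ := h.sd3 q hq
  have hwq : q.map (fun r => P.Pi [r.1, r.2]) ∈ P.D := hiff.mpr ⟨hfst, hsdnD⟩
  have hwD : w ∈ P.D := by rw [← hmapq]; exact hwq
  have hPiFst : P.Pi (q.map Prod.fst) ∈ SX := hSX.1.2.2 _ hfst hfstSX
  have hPiSdn : P.Pi (sdn P q) ∈ T := hT.1.2.2 _ hsdnD hsdnT
  have hde : dec h (P.Pi w) = (P.Pi (q.map Prod.fst), P.Pi (sdn P q)) := by
    refine dec_eq h (hSXX hPiFst) (hTN hPiSdn) ?_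
    rw [← hmapq]
    exact heq hwq
  rw [hde]
  exact ⟨hwD, hPiFst, hPiSdn⟩

lemma ST_pi_mem (w : List L) (hw : ∀ g ∈ w, g ∈ {g | ∃ s ∈ SX, ∃ t ∈ T, g = P.Pi [s, t]}) :
    P.Pi w ∈ {g | ∃ s ∈ SX, ∃ t ∈ T, g = P.Pi [s, t]} := by
  obtain ⟨_, h1, h2⟩ := ST_word h hSX hSXX hT hTN hnorm w hw
  exact ⟨_, h1, _, h2, (dec_spec h (P.Pi w)).2.2.2⟩

lemma ST_inv {g : L} (hg : g ∈ {g | ∃ s ∈ SX, ∃ t ∈ T, g = P.Pi [s, t]}) :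
    P.inv g ∈ {g | ∃ s ∈ SX, ∃ t ∈ T, g = P.Pi [s, t]} := by
  obtain ⟨h1, h2⟩ := dec_mem_ST h hSX hSXX hT hTN hnorm hg
  have hdi := dec_inv h g
  have hsSX : P.inv (dec h g).1 ∈ SX := hSX.1.2.1 _ h1
  have htT : P.cnj (P.inv (dec h g).1) (P.inv (dec h g).2) ∈ T := by
    have := (hnorm _ hsSX).2
    rw [← this]
    exact Set.mem_image_of_mem _ (hT.1.2.1 _ h2)
  refine ⟨_, hsSX, _, htT, ?_⟩
  have hspec := (dec_spec h (P.inv g)).2.2.2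
  rw [hdi] at hspec
  exact hspec

lemma ST_subgroup : P.IsSubgroup {g | ∃ s ∈ SX, ∃ t ∈ T, g = P.Pi [s, t]} := by
  refine ⟨⟨⟨P.one, P.one, one_mem_psub hSX.1, P.one, one_mem_psub hT.1,
      (pi_pair_one_one P).symm⟩, ?_, ?_⟩, ?_⟩
  · exact fun g hg => ST_inv h hSX hSXX hT hTN hnorm hg
  · exact fun w _ hw => ST_pi_mem h hSX hSXX hT hTN hnorm w hw
  · exact fun w hw => (ST_word h hSX hSXX hT hTN hnorm w hw).1

end ST

end Stmt17Aux
namespace Stmt17Aux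
open PartialGroup

variable {L : Type u} {P : PartialGroup L} {X N : Set L}

section ST2

variable (h : IsIntSemidirect P X N) {SX T : Set L}
  (hSX : P.IsSubgroup SX) (hSXX : SX ⊆ X) (hT : P.IsSubgroup T) (hTN : T ⊆ N)
  (hnorm : ∀ s ∈ SX, (∀ t ∈ T, P.memD s t) ∧ P.cnj s '' T = T)
set_option linter.unusedSectionVars false
include h hSX hSXX hT hTN hnorm

lemma ST_cnj {g t' : L} (hg : g ∈ {g | ∃ s ∈ SX, ∃ t ∈ T, g = P.Pi [s, t]}) (ht' : t' ∈ T) :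
    P.cnj g t' ∈ T := by
  have hginv := ST_inv h hSX hSXX hT hTN hnorm hg
  have htST := T_subset_ST h hSX hSXX hT hTN hnorm ht'
  have hwST := mem_triple hginv htST hg
  obtain ⟨hwD, _, hd2T⟩ := ST_word h hSX hSXX hT hTN hnorm [P.inv g, t', g] hwST
  obtain ⟨hfstD, hsdnD, hde⟩ := dec_pi h [P.inv g, t', g] hwD
  have hmap : (([P.inv g, t', g].map (dec h)).map Prod.fst) =
      [P.inv (dec h g).1, P.one, (dec h g).1] := by
    simp only [List.map_cons, List.map_nil]
    rw [dec_inv h g, dec_of_N h (hTN ht')]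
  have hone : P.Pi [P.inv (dec h g).1, P.one, (dec h g).1] = P.one := by
    have hss : [P.inv (dec h g).1, (dec h g).1] ∈ P.D := inv_mul_mem P (dec h g).1
    have e := P.pg3_eq [P.inv (dec h g).1] [] [(dec h g).1] (by simpa using hss)
    simp only [List.nil_append, List.append_nil, List.cons_append, List.singleton_append] at e
    have e' : P.Pi [P.inv (dec h g).1, (dec h g).1] =
        P.Pi [P.inv (dec h g).1, P.one, (dec h g).1] := by
      simpa [PartialGroup.one] using e
    rw [← e', inv_mul_eq]
  have hd1 : (dec h (P.Pi [P.inv g, t', g])).1 = P.one := by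
    rw [hde]
    show P.Pi (([P.inv g, t', g].map (dec h)).map Prod.fst) = P.one
    rw [hmap]; exact hone
  have hspec := (dec_spec h (P.Pi [P.inv g, t', g])).2.2.2
  rw [hd1] at hspec
  have hfin : P.Pi [P.inv g, t', g] = (dec h (P.Pi [P.inv g, t', g])).2 :=
    hspec.trans (pi_one_pair P _).2
  show P.Pi [P.inv g, t', g] ∈ T
  rw [hfin]; exact hd2T

lemma ST_card_eq :
    Nat.card {g | ∃ s ∈ SX, ∃ t ∈ T, g = P.Pi [s, t]} = Nat.card SX * Nat.card T := by
  have e : ↥SX × ↥T ≃ ↥{g | ∃ s ∈ SX, ∃ t ∈ T, g = P.Pi [s, t]} := {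
    toFun := fun st => ⟨P.Pi [st.1.1, st.2.1], st.1.1, st.1.2, st.2.1, st.2.2, rfl⟩
    invFun := fun g => (⟨(dec h g.1).1, (dec_mem_ST h hSX hSXX hT hTN hnorm g.2).1⟩,
      ⟨(dec h g.1).2, (dec_mem_ST h hSX hSXX hT hTN hnorm g.2).2⟩)
    left_inv := by
      rintro ⟨⟨s, hs⟩, ⟨t, ht⟩⟩
      have hd := dec_eq h (hSXX hs) (hTN ht) rfl
      simp only [hd]
    right_inv := fun g => Subtype.ext ((dec_spec h g.1).2.2.2).symm }
  rw [← Nat.card_congr e, Nat.card_prod]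

lemma ST_max (p : ℕ) (hp : p.Prime)
    (hSm : IsMaxPSubIn p P X SX) (hTm : IsMaxPSubIn p P N T) :
    IsMaxPSubIn p P Set.univ {g | ∃ s ∈ SX, ∃ t ∈ T, g = P.Pi [s, t]} := by
  obtain ⟨a, hca⟩ := hSm.2.1.2
  obtain ⟨b, hcb⟩ := hTm.2.1.2
  refine ⟨Set.subset_univ _, ⟨ST_subgroup h hSX hSXX hT hTN hnorm,
    ⟨a + b, by rw [ST_card_eq h hSX hSXX hT hTN hnorm, hca, hcb, pow_add]⟩⟩, ?_⟩
  intro K _ hKp hSTK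
  obtain ⟨hKsub, m, hKcard⟩ := hKp
  letI : Group ↥K := grpOf hKsub
  let HN : Subgroup ↥K := {
    carrier := {a : ↥K | (a : L) ∈ N}
    mul_mem' := fun {x y} hx hy =>
      h.subN.2.2 [x.1, y.1] (hKsub.2 _ (mem_pair x.2 y.2)) (mem_pair hx hy)
    one_mem' := one_mem_psub h.subN
    inv_mem' := fun {x} hx => h.subN.2.1 _ hx }
  -- Step 1 : K ∩ N = T
  have hKN_sub : P.IsSubgroup (K ∩ N) :=
    ⟨⟨⟨P.one, one_mem_psub hKsub.1, one_mem_psub h.subN⟩,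
      fun g hg => ⟨hKsub.1.2.1 g hg.1, h.subN.2.1 g hg.2⟩,
      fun w hwD hw => ⟨hKsub.1.2.2 w hwD (fun x hx => (hw x hx).1),
        h.subN.2.2 w hwD (fun x hx => (hw x hx).2)⟩⟩,
      fun w hw => hKsub.2 w (fun x hx => (hw x hx).1)⟩
  have eKN : Nat.card ↥(K ∩ N : Set L) = Nat.card HN := Nat.card_congr {
    toFun := fun g => ⟨⟨g.1, g.2.1⟩, g.2.2⟩
    invFun := fun a => ⟨a.1.1, a.1.2, a.2⟩
    left_inv := fun _ => rfl
    right_inv := fun _ => rfl }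
  have hKNp : ∃ k, Nat.card ↥(K ∩ N : Set L) = p ^ k := by
    have hdvd : Nat.card HN ∣ Nat.card ↥K := Subgroup.card_subgroup_dvd_card HN
    rw [← eKN, hKcard] at hdvd
    obtain ⟨i, _, hi⟩ := (Nat.dvd_prime_pow hp).mp hdvd
    exact ⟨i, hi⟩
  have hTKN : T ⊆ K ∩ N :=
    fun t ht => ⟨hSTK (T_subset_ST h hSX hSXX hT hTN hnorm ht), hTN ht⟩
  have hKN_eq : K ∩ N = T := hTm.2.2 (K ∩ N) Set.inter_subset_right ⟨hKN_sub, hKNp⟩ hTKN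
  -- Step 2 : the image of K under the first projection equals SX
  let KX : Set L := (fun g => (dec h g).1) '' K
  have hKX_sub : P.IsSubgroup KX := by
    refine ⟨⟨⟨(dec h P.one).1, P.one, one_mem_psub hKsub.1, rfl⟩, ?_, ?_⟩, ?_⟩
    · rintro x ⟨g, hg, rfl⟩
      refine ⟨P.inv g, hKsub.1.2.1 g hg, ?_⟩
      show (dec h (P.inv g)).1 = P.inv (dec h g).1
      rw [dec_inv h g]
    · intro w hwD hw
      obtain ⟨ws, hws, rfl⟩ := exists_preimage_word _ K w hw
      have hwsD : ws ∈ P.D := hKsub.2 ws hws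
      have hdp := dec_pi h ws hwsD
      have hmm : (ws.map (dec h)).map Prod.fst = ws.map (fun g => (dec h g).1) := by
        rw [List.map_map]; rfl
      refine ⟨P.Pi ws, hKsub.1.2.2 ws hwsD hws, ?_⟩
      show (dec h (P.Pi ws)).1 = P.Pi (ws.map fun g => (dec h g).1)
      rw [hdp.2.2]
      show P.Pi ((ws.map (dec h)).map Prod.fst) = P.Pi (ws.map fun g => (dec h g).1)
      rw [hmm]
    · intro w hw
      obtain ⟨ws, hws, rfl⟩ := exists_preimage_word _ K w hw
      have hdp := dec_pi h ws (hKsub.2 ws hws)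
      have hmm : (ws.map (dec h)).map Prod.fst = ws.map (fun g => (dec h g).1) := by
        rw [List.map_map]; rfl
      rw [← hmm]; exact hdp.1
  have hKX_X : KX ⊆ X := by rintro x ⟨g, _, rfl⟩; exact (dec_spec h g).1
  have hSX_KX : SX ⊆ KX := by
    intro s hs
    refine ⟨s, hSTK (SX_subset_ST h hSX hSXX hT hTN hnorm hs), ?_⟩
    show (dec h s).1 = s
    rw [dec_of_X h (hSXX hs)]
  have key : ∀ x y : ↥K, x⁻¹ * y ∈ HN ↔ (dec h x.1).1 = (dec h y.1).1 := by
    intro x y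
    have hw : [P.inv x.1, y.1] ∈ P.D := hKsub.2 _ (mem_pair (hKsub.1.2.1 _ x.2) y.2)
    have hdp := dec_pi h [P.inv x.1, y.1] hw
    have hmap : (([P.inv x.1, y.1].map (dec h)).map Prod.fst) =
        [P.inv (dec h x.1).1, (dec h y.1).1] := by
      simp only [List.map_cons, List.map_nil]
      rw [dec_inv h x.1]
    constructor
    · intro hmem
      have hN : P.Pi [P.inv x.1, y.1] ∈ N := hmem
      have hth := hdp.2.2
      rw [dec_of_N h hN] at hth
      have h1 : P.one = P.Pi (([P.inv x.1, y.1].map (dec h)).map Prod.fst) :=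
        congrArg Prod.fst hth
      rw [hmap] at h1
      have hD2 : [P.inv (dec h x.1).1, (dec h y.1).1] ∈ P.D := by
        rw [← hmap]; exact hdp.1
      have h2 := eq_inv_of_pi_eq_one P hD2 h1.symm
      rw [P.inv_inv] at h2
      exact h2.symm
    · intro hfe
      show P.Pi [P.inv x.1, y.1] ∈ N
      have h1 : (dec h (P.Pi [P.inv x.1, y.1])).1 = P.one := by
        rw [hdp.2.2]
        show P.Pi (([P.inv x.1, y.1].map (dec h)).map Prod.fst) = P.one
        rw [hmap, hfe]
        exact inv_mul_eq P _
      have hspec := (dec_spec h (P.Pi [P.inv x.1, y.1])).2.2.2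
      rw [h1] at hspec
      have hfin : P.Pi [P.inv x.1, y.1] = (dec h (P.Pi [P.inv x.1, y.1])).2 :=
        hspec.trans (pi_one_pair P _).2
      rw [hfin]
      exact (dec_spec h _).2.1
  have hbij : Function.Bijective
      (Quotient.lift (fun a : ↥K => (⟨(dec h a.1).1, ⟨a.1, a.2, rfl⟩⟩ : ↥KX))
        (fun a b hab => Subtype.ext ((key a b).mp (QuotientGroup.leftRel_apply.mp hab))) :
        ↥K ⧸ HN → ↥KX) := by
    constructor
    · intro q1 q2
      refine Quotient.inductionOn₂ q1 q2 ?_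
      intro a b he
      have : (dec h a.1).1 = (dec h b.1).1 := congrArg Subtype.val he
      exact Quotient.sound (QuotientGroup.leftRel_apply.mpr ((key a b).mpr this))
    · rintro ⟨x, g, hgK, rfl⟩
      exact ⟨Quotient.mk _ ⟨g, hgK⟩, rfl⟩
  have hKX_card : ∃ k, Nat.card ↥KX = p ^ k := by
    have e1 : Nat.card ↥KX = Nat.card (↥K ⧸ HN) :=
      (Nat.card_congr (Equiv.ofBijective _ hbij)).symm
    have hdvd := Subgroup.card_quotient_dvd_card HN
    rw [hKcard] at hdvd
    rw [← e1] at hdvd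
    obtain ⟨i, _, hi⟩ := (Nat.dvd_prime_pow hp).mp hdvd
    exact ⟨i, hi⟩
  have hKX_eq : KX = SX := hSm.2.2 KX hKX_X ⟨hKX_sub, hKX_card⟩ hSX_KX
  -- final step
  refine Set.Subset.antisymm ?_ hSTK
  intro g hgK
  have hx : (dec h g).1 ∈ SX := by rw [← hKX_eq]; exact ⟨g, hgK, rfl⟩
  have hxK : (dec h g).1 ∈ K := hSTK (SX_subset_ST h hSX hSXX hT hTN hnorm hx)
  have hnval : (dec h g).2 = P.Pi [P.inv (dec h g).1, g] := by
    have hid := pi_inv_cancel_left P (dec_spec h g).2.2.1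
    rw [← (dec_spec h g).2.2.2] at hid
    exact hid.symm
  have hnK : (dec h g).2 ∈ K := by
    rw [hnval]
    exact hKsub.1.2.2 _ (hKsub.2 _ (mem_pair (hKsub.1.2.1 _ hxK) hgK))
      (mem_pair (hKsub.1.2.1 _ hxK) hgK)
  have hnT : (dec h g).2 ∈ T := by rw [← hKN_eq]; exact ⟨hnK, (dec_spec h g).2.1⟩
  exact ⟨_, hx, _, hnT, (dec_spec h g).2.2.2⟩

end ST2

end Stmt17Aux

open Stmt17Aux in
theorem stmt17 {L : Type u} (p : ℕ) (hp : p.Prime) (P : PartialGroup L) (X N : Set L)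
    (h : IsIntSemidirect P X N) (SX T : Set L)
    (hSX : P.IsSubgroup SX) (hSXX : SX ⊆ X) (hT : P.IsSubgroup T) (hTN : T ⊆ N)
    (hnorm : ∀ s ∈ SX, (∀ t ∈ T, P.memD s t) ∧ P.cnj s '' T = T) :
    P.IsSubgroup {g | ∃ s ∈ SX, ∃ t ∈ T, g = P.Pi [s, t]} ∧
    SX ⊆ {g | ∃ s ∈ SX, ∃ t ∈ T, g = P.Pi [s, t]} ∧
    T ⊆ {g | ∃ s ∈ SX, ∃ t ∈ T, g = P.Pi [s, t]} ∧
    (∀ g ∈ {g | ∃ s ∈ SX, ∃ t ∈ T, g = P.Pi [s, t]}, ∀ t ∈ T, P.cnj g t ∈ T) ∧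
    SX ∩ T ⊆ {P.one} ∧
    ((∃ k : ℕ, Nat.card SX = p ^ k) → (∃ k : ℕ, Nat.card T = p ^ k) →
      ∃ k : ℕ, Nat.card {g | ∃ s ∈ SX, ∃ t ∈ T, g = P.Pi [s, t]} = p ^ k) ∧
    (IsMaxPSubIn p P X SX → IsMaxPSubIn p P N T →
      IsMaxPSubIn p P Set.univ {g | ∃ s ∈ SX, ∃ t ∈ T, g = P.Pi [s, t]}) := by
  refine ⟨ST_subgroup h hSX hSXX hT hTN hnorm, SX_subset_ST h hSX hSXX hT hTN hnorm,
    T_subset_ST h hSX hSXX hT hTN hnorm, ?_, ?_, ?_, ?_⟩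
  · exact fun g hg t ht => ST_cnj h hSX hSXX hT hTN hnorm hg ht
  · rintro g ⟨hgS, hgT⟩
    have e1 := dec_eq h (hSXX hgS) (one_mem_psub h.subN) (pi_pair_one P g).2.symm
    have e2 := dec_eq h (one_mem_psub h.subX) (hTN hgT) (pi_one_pair P g).2.symm
    have hg1 : g = P.one := congrArg Prod.fst (e1.symm.trans e2)
    simp [hg1]
  · rintro ⟨a, ha⟩ ⟨b, hb⟩
    exact ⟨a + b, by rw [ST_card_eq h hSX hSXX hT hTN hnorm, ha, hb, pow_add]⟩
  · exact fun hSm hTm => ST_max h hSX hSXX hT hTN hnorm p hp hSm hTm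
end

section
/- Let L be a partial group and Δ a set of subgroups of L such that D(L) = D(L)_Δ. Then for every P ∈ Δ: (a) N_L(P) is a subgroup of L; (b) if f ∈ L with P ⊆ S_f and P^f ∈ Δ, then N_L(P) ⊆ D(f) and c_f: N_L(P) → N_L(P^f) is an isomorphism of groups; (c) if w = (f_1,...,f_n) ∈ D(L) via P_0, P_1, ..., P_n ∈ Δ, then c_{Π(w)} = c_{f_1} ∘ c_{f_2} ∘ ⋯ ∘ c_{f_n} as an isomorphism from N_L(P_0) to N_L(P_n). -/
universe u v

open PartialGroup

/-! Since `D(L) = D(L)_Δ`, a word lies in `D(L)` as soon as it can be followed along a chain of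
members of `Δ`; every word used below is certified this way. Conjugation by `f` is controlled by
the word `(f⁻¹, g₁, f, …, f⁻¹, gₙ, f)`: contracting each triple gives `Π(g₁^f, …, gₙ^f)`, while
cancelling the inner pairs `(f, f⁻¹)` (the shortened word still follows the chain) gives
`Π(g₁, …, gₙ)^f`. This makes `c_f` multiplicative on `N_L(P)` and gives `(x^g)^f = (x^f)^(g^f)`,
so `c_f` maps `N_L(P)` into `N_L(P^f)`, with inverse `c_{f⁻¹}`. For (c), `w⁻¹ ∘ (g) ∘ w` follows
the chain of `w` backwards and then forwards, and contracting it from the middle outwards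
computes `g^{Π(w)}` one letter at a time; (a) is (c) applied to words in `N_L(P)`. -/

namespace PartialGroup

variable {L : Type u} (P : PartialGroup L)

attribute [simp] inv_inv Pi_singleton

@[simp] lemma wInv_nil : P.wInv [] = [] := rfl

@[simp] lemma wInv_cons (g : L) (w : List L) : P.wInv (g :: w) = P.wInv w ++ [P.inv g] := by
  simp [wInv]

@[simp] lemma wInv_append (u v : List L) : P.wInv (u ++ v) = P.wInv v ++ P.wInv u := by
  simp [wInv]

@[simp] lemma wInv_wInv (w : List L) : P.wInv (P.wInv w) = w := by
  simp [wInv, Function.comp_def]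

lemma contract_mem (u v w : List L) (h : u ++ v ++ w ∈ P.D) : u ++ P.Pi v :: w ∈ P.D := by
  simpa using P.pg3_mem u v w h

lemma Pi_contract (u v w : List L) (h : u ++ v ++ w ∈ P.D) :
    P.Pi (u ++ v ++ w) = P.Pi (u ++ P.Pi v :: w) := by
  simpa using P.pg3_eq u v w h

lemma insert_one {u w : List L} (h : u ++ w ∈ P.D) :
    u ++ P.one :: w ∈ P.D ∧ P.Pi (u ++ P.one :: w) = P.Pi (u ++ w) := by
  have h' : u ++ [] ++ w ∈ P.D := by simpa using h
  have e := (P.Pi_contract u [] w h').symm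
  rw [List.append_nil] at e
  exact ⟨P.contract_mem u [] w h', e⟩

lemma wInv_append_mem {w : List L} (h : w ∈ P.D) : P.wInv w ++ w ∈ P.D := P.pg4_mem w h

lemma Pi_wInv_append {w : List L} (h : w ∈ P.D) : P.Pi (P.wInv w ++ w) = P.one := P.pg4_eq w h

lemma wInv_mem {w : List L} (h : w ∈ P.D) : P.wInv w ∈ P.D :=
  P.append_left_mem (P.wInv_append_mem h)

lemma Pi_append_wInv {w : List L} (h : w ∈ P.D) : P.Pi (w ++ P.wInv w) = P.one := by
  simpa using P.Pi_wInv_append (P.wInv_mem h)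

lemma Pi_pair_inv (f : L) : P.Pi [f, P.inv f] = P.one := by
  simpa using P.Pi_wInv_append (P.singleton_mem (P.inv f))

lemma wInv_append_append_mem {u v : List L} (h : u ++ v ∈ P.D) : P.wInv u ++ u ++ v ∈ P.D := by
  have h' := P.wInv_append_mem h
  rw [wInv_append] at h'
  exact P.append_right_mem (u := P.wInv v) (by simpa using h')

lemma Pi_wInv_append_append {u v : List L} (h : u ++ v ∈ P.D) :
    P.Pi (P.wInv u ++ u ++ v) = P.Pi v := by
  have hv : [] ++ v ∈ P.D := P.append_right_mem h
  have h' : [] ++ (P.wInv u ++ u) ++ v ∈ P.D := by simpa using P.wInv_append_append_mem h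
  rw [← List.nil_append (P.wInv u ++ u), P.Pi_contract _ _ _ h',
    P.Pi_wInv_append (P.append_left_mem h), (P.insert_one hv).2, List.nil_append]

lemma append_append_wInv_mem {u v : List L} (h : u ++ v ∈ P.D) : u ++ v ++ P.wInv v ∈ P.D := by
  have h' := P.wInv_append_mem (P.wInv_mem h)
  rw [wInv_wInv, wInv_append] at h'
  exact P.append_left_mem (v := P.wInv u) (by simpa using h')

lemma Pi_append_append_wInv {u v : List L} (h : u ++ v ∈ P.D) :
    P.Pi (u ++ v ++ P.wInv v) = P.Pi u := by
  have hu : u ++ [] ∈ P.D := by simpa using P.append_left_mem h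
  have h' : u ++ (v ++ P.wInv v) ++ [] ∈ P.D := by simpa using P.append_append_wInv_mem h
  rw [List.append_assoc, ← List.append_nil (u ++ _), P.Pi_contract _ _ _ h',
    P.Pi_append_wInv (P.append_right_mem h), (P.insert_one hu).2, List.append_nil]

lemma Pi_wInv {w : List L} (h : w ∈ P.D) : P.Pi (P.wInv w) = P.inv (P.Pi w) := by
  set a := P.Pi w
  have h₀ : P.wInv w ++ w ++ [] ∈ P.D := by simpa using P.wInv_append_mem h
  have h₁ : P.wInv w ++ [a] ∈ P.D := P.contract_mem _ w [] h₀
  have e₁ : P.Pi (P.wInv w ++ [a]) = P.one := by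
    simpa [← P.Pi_wInv_append h] using (P.Pi_contract _ w [] h₀).symm
  have h₂ : [] ++ (P.wInv w ++ [a]) ++ [P.inv a] ∈ P.D := by
    simpa using P.append_append_wInv_mem h₁
  have hinv : [] ++ [P.inv a] ∈ P.D := P.singleton_mem _
  have e₂ := P.Pi_contract _ _ _ h₂
  rw [e₁, (P.insert_one hinv).2, List.nil_append, List.nil_append] at e₂
  rw [← P.Pi_append_append_wInv h₁]
  simpa using e₂

lemma inv_cnj {f g : L} (h : P.memD f g) : P.inv (P.cnj f g) = P.cnj f (P.inv g) := by
  simpa [cnj] using (P.Pi_wInv h).symm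

lemma memD_inv_cnj_and_cnj_inv_cnj {f x : L} (h : P.memD f x) :
    P.memD (P.inv f) (P.cnj f x) ∧ P.cnj (P.inv f) (P.cnj f x) = x := by
  have h₁ : [f, P.inv f, x] ++ [f] ∈ P.D := by
    simpa using P.wInv_append_append_mem (u := [P.inv f]) (v := [x, f]) h
  have h₂ : [f] ++ [P.inv f, x, f] ++ [P.inv f] ∈ P.D := by
    simpa using P.append_append_wInv_mem h₁
  refine ⟨by simpa [memD, cnj] using P.contract_mem _ _ _ h₂, ?_⟩
  have e₁ := P.Pi_append_append_wInv h₁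
  have e₂ := P.Pi_wInv_append_append (u := [P.inv f]) (v := [x])
    (P.append_left_mem (v := [f]) h)
  simp only [wInv_cons, wInv_nil, List.nil_append, inv_inv, List.cons_append] at e₁ e₂
  rw [e₂, Pi_singleton] at e₁
  have e₃ := P.Pi_contract _ _ _ h₂
  simp only [List.cons_append, List.nil_append] at e₃
  simpa [cnj, ← e₃] using e₁

lemma cnj_inv_image {f : L} {Q : Set L} (h : ∀ x ∈ Q, P.memD f x) :
    (∀ y ∈ P.cnj f '' Q, P.memD (P.inv f) y) ∧ P.cnj (P.inv f) '' (P.cnj f '' Q) = Q := by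
  refine ⟨?_, ?_⟩
  · rintro _ ⟨x, hx, rfl⟩
    exact (P.memD_inv_cnj_and_cnj_inv_cnj (h x hx)).1
  · rw [Set.image_image]
    exact (Set.image_congr fun x hx => (P.memD_inv_cnj_and_cnj_inv_cnj (h x hx)).2).trans
      (Set.image_id Q)

def conjSpread (f : L) (w : List L) : List L := w.flatMap fun g => [P.inv f, g, f]

lemma Pi_append_conjSpread (f : L) {w u : List L} (h : u ++ P.conjSpread f w ∈ P.D) :
    u ++ w.map (P.cnj f) ∈ P.D ∧
      P.Pi (u ++ P.conjSpread f w) = P.Pi (u ++ w.map (P.cnj f)) := by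
  induction w generalizing u with
  | nil => exact ⟨by simpa [conjSpread] using h, by simp [conjSpread]⟩
  | cons g w ih =>
    have h' : u ++ [P.inv f, g, f] ++ P.conjSpread f w ∈ P.D := by simpa [conjSpread] using h
    obtain ⟨hmem, e⟩ := ih (u := u ++ [P.cnj f g])
      (by simpa [cnj] using P.contract_mem _ _ _ h')
    refine ⟨by simpa using hmem, ?_⟩
    rw [show u ++ P.conjSpread f (g :: w) = u ++ [P.inv f, g, f] ++ P.conjSpread f w by
      simp [conjSpread], P.Pi_contract _ _ _ h']
    simpa [cnj] using e

lemma memD_Pi_and_cnj_Pi {w : List L} {g : L} (h : P.wInv w ++ g :: w ∈ P.D) :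
    P.memD (P.Pi w) g ∧ P.cnj (P.Pi w) g = P.Pi (P.wInv w ++ g :: w) := by
  have hw : w ∈ P.D := P.append_right_mem (u := P.wInv w ++ [g]) (by simpa using h)
  have h₁ : [] ++ P.wInv w ++ g :: w ∈ P.D := h
  have h₂ : [P.inv (P.Pi w), g] ++ w ++ [] ∈ P.D := by
    simpa [P.Pi_wInv hw] using P.contract_mem _ _ _ h₁
  refine ⟨by simpa [memD] using P.contract_mem _ _ _ h₂, ?_⟩
  have e₁ := P.Pi_contract _ _ _ h₁
  have e₂ := P.Pi_contract _ _ _ h₂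
  simp only [List.nil_append, List.append_nil, P.Pi_wInv hw, List.cons_append] at e₁ e₂
  rw [cnj, ← e₂, e₁]

end PartialGroup

section Dvia

variable {L : Type u} {P : PartialGroup L} {Δ : Set (Set L)}

/-- The last member `Pₖ` of the chain `P₀, …, Pₖ` witnessing `Dvia P Δ w P₀`. -/
def chainEnd (P : PartialGroup L) (w : List L) (Q : Set L) : Set L :=
  w.foldl (fun R g => P.cnj g '' R) Q

lemma chainEnd_append (u v : List L) (Q : Set L) :
    chainEnd P (u ++ v) Q = chainEnd P v (chainEnd P u Q) :=
  List.foldl_append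

lemma Dvia.start_mem {w : List L} {Q : Set L} (h : Dvia P Δ w Q) : Q ∈ Δ := by
  cases w with
  | nil => exact h
  | cons g w => exact h.1

lemma dvia_append_iff {u v : List L} {Q : Set L} :
    Dvia P Δ (u ++ v) Q ↔ Dvia P Δ u Q ∧ Dvia P Δ v (chainEnd P u Q) := by
  induction u generalizing Q with
  | nil => exact ⟨fun h => ⟨h.start_mem, h⟩, And.right⟩
  | cons g u ih =>
    simp only [List.cons_append, Dvia, ih]
    exact ⟨fun ⟨hQ, hg, hu, hv⟩ => ⟨⟨hQ, hg, hu⟩, hv⟩,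
      fun ⟨⟨hQ, hg, hu⟩, hv⟩ => ⟨hQ, hg, hu, hv⟩⟩

lemma inv_mem_NL {g : L} {Q : Set L} (hg : g ∈ NL P Q) : P.inv g ∈ NL P Q := by
  have h := P.cnj_inv_image hg.1
  rwa [hg.2] at h

lemma Dvia.cons_of_mem_NL {g : L} {w : List L} {Q : Set L} (hQ : Q ∈ Δ) (hg : g ∈ NL P Q)
    (h : Dvia P Δ w Q) : Dvia P Δ (g :: w) Q :=
  ⟨hQ, hg.1, by rwa [hg.2]⟩

lemma Dvia.inv_cons {f : L} {w : List L} {Q : Set L} (hf : ∀ x ∈ Q, P.memD f x)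
    (hQf : P.cnj f '' Q ∈ Δ) (h : Dvia P Δ w Q) : Dvia P Δ (P.inv f :: w) (P.cnj f '' Q) :=
  ⟨hQf, (P.cnj_inv_image hf).1, by rwa [(P.cnj_inv_image hf).2]⟩

lemma dvia_of_forall_mem_NL {w : List L} {Q : Set L} (hQ : Q ∈ Δ)
    (hw : ∀ g ∈ w, g ∈ NL P Q) : Dvia P Δ w Q := by
  induction w with
  | nil => exact hQ
  | cons g w ih =>
    simp only [List.forall_mem_cons] at hw
    exact Dvia.cons_of_mem_NL hQ hw.1 (ih hw.2)

lemma chainEnd_of_forall_mem_NL {w : List L} {Q : Set L} (hw : ∀ g ∈ w, g ∈ NL P Q) :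
    chainEnd P w Q = Q := by
  induction w with
  | nil => rfl
  | cons g w ih =>
    simp only [List.forall_mem_cons] at hw
    simp only [chainEnd, List.foldl_cons, hw.1.2]
    exact ih hw.2

lemma image_foldl_cnj (w : List L) (Q : Set L) :
    (fun x => w.foldl (fun y f => P.cnj f y) x) '' Q = chainEnd P w Q := by
  induction w generalizing Q with
  | nil => exact Set.image_id Q
  | cons g w ih =>
    change _ = chainEnd P w (P.cnj g '' Q)
    rw [← ih, Set.image_image]
    rfl

lemma dvia_conjSpread {f : L} {w : List L} {Q : Set L} (hQ : Q ∈ Δ)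
    (hf : ∀ x ∈ Q, P.memD f x) (hQf : P.cnj f '' Q ∈ Δ) (hw : ∀ g ∈ w, g ∈ NL P Q) :
    Dvia P Δ (P.conjSpread f w) (P.cnj f '' Q) := by
  induction w with
  | nil => exact hQf
  | cons g w ih =>
    simp only [List.forall_mem_cons] at hw
    exact Dvia.inv_cons hf hQf (Dvia.cons_of_mem_NL hQ hw.1 ⟨hQ, hf, ih hw.2⟩)

lemma Dvia.cancel {u v : List L} {f : L} {Q : Set L}
    (h : Dvia P Δ (u ++ f :: P.inv f :: v) Q) : Dvia P Δ (u ++ v) Q := by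
  rw [dvia_append_iff] at h ⊢
  obtain ⟨hu, -, hf, -, -, hv⟩ := h
  exact ⟨hu, by rwa [(P.cnj_inv_image hf).2] at hv⟩

lemma Dvia.wInv {w : List L} {Q : Set L} (h : Dvia P Δ w Q) :
    Dvia P Δ (P.wInv w) (chainEnd P w Q) ∧ chainEnd P (P.wInv w) (chainEnd P w Q) = Q := by
  induction w generalizing Q with
  | nil => exact ⟨h, rfl⟩
  | cons g w ih =>
    obtain ⟨hQ, hg, hw⟩ := h
    obtain ⟨hrev, hend⟩ := ih hw
    rw [wInv_cons]
    change Dvia P Δ _ (chainEnd P w (P.cnj g '' Q)) ∧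
      chainEnd P _ (chainEnd P w (P.cnj g '' Q)) = Q
    refine ⟨dvia_append_iff.2 ⟨hrev, ?_⟩, ?_⟩
    · rw [hend]
      exact Dvia.inv_cons hg hw.start_mem hQ
    · rw [chainEnd_append, hend]
      exact (P.cnj_inv_image hg).2

lemma Dvia.wInv_append_cons {w : List L} {g : L} {Q : Set L} (h : Dvia P Δ w Q)
    (hg : g ∈ NL P Q) : Dvia P Δ (P.wInv w ++ g :: w) (chainEnd P w Q) := by
  obtain ⟨hrev, hend⟩ := h.wInv
  refine dvia_append_iff.2 ⟨hrev, ?_⟩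
  rw [hend]
  exact Dvia.cons_of_mem_NL h.start_mem hg h

end Dvia

section DeltaDomain

variable {L : Type u} {P : PartialGroup L} {Δ : Set (Set L)}

lemma mem_D_of_dvia (hD : P.D = {w | ∃ Q, Dvia P Δ w Q}) {w : List L} {Q : Set L}
    (h : Dvia P Δ w Q) : w ∈ P.D :=
  hD ▸ ⟨Q, h⟩

lemma Pi_cancel (hD : P.D = {w | ∃ Q, Dvia P Δ w Q}) {u v : List L} {f : L} {Q : Set L}
    (h : Dvia P Δ (u ++ f :: P.inv f :: v) Q) : P.Pi (u ++ f :: P.inv f :: v) = P.Pi (u ++ v) := by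
  have e := P.Pi_contract u [f, P.inv f] v (by simpa using mem_D_of_dvia hD h)
  rw [P.Pi_pair_inv, (P.insert_one (mem_D_of_dvia hD h.cancel)).2] at e
  simpa using e

lemma Pi_append_cons_conjSpread (hD : P.D = {w | ∃ Q, Dvia P Δ w Q}) {f : L} {w u : List L}
    {Q : Set L} (h : Dvia P Δ (u ++ f :: P.conjSpread f w) Q) :
    Dvia P Δ (u ++ w ++ [f]) Q ∧ P.Pi (u ++ f :: P.conjSpread f w) = P.Pi (u ++ w ++ [f]) := by
  induction w generalizing u with
  | nil => simpa [conjSpread] using h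
  | cons g w ih =>
    have h' : Dvia P Δ (u ++ f :: P.inv f :: g :: f :: P.conjSpread f w) Q := by
      simpa [conjSpread] using h
    obtain ⟨hd, e⟩ := ih (u := u ++ [g]) (by simpa using h'.cancel)
    refine ⟨by simpa using hd, ?_⟩
    rw [show P.conjSpread f (g :: w) = P.inv f :: g :: f :: P.conjSpread f w by simp [conjSpread],
      Pi_cancel hD h']
    simpa using e

lemma map_cnj_mem_D (hD : P.D = {w | ∃ Q, Dvia P Δ w Q}) {f : L} {w : List L} {Q : Set L}
    (hQ : Q ∈ Δ) (hf : ∀ x ∈ Q, P.memD f x) (hQf : P.cnj f '' Q ∈ Δ)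
    (hw : ∀ x ∈ w, x ∈ NL P Q) : w.map (P.cnj f) ∈ P.D := by
  simpa using (P.Pi_append_conjSpread f (u := [])
    (by simpa using mem_D_of_dvia hD (dvia_conjSpread hQ hf hQf hw))).1

lemma cnj_Pi_eq_Pi_map_cnj (hD : P.D = {w | ∃ Q, Dvia P Δ w Q}) {f g : L} {w : List L}
    {Q : Set L} (hQ : Q ∈ Δ) (hf : ∀ x ∈ Q, P.memD f x) (hQf : P.cnj f '' Q ∈ Δ)
    (hw : ∀ x ∈ g :: w, x ∈ NL P Q) :
    P.cnj f (P.Pi (g :: w)) = P.Pi ((g :: w).map (P.cnj f)) := by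
  have hs := dvia_conjSpread hQ hf hQf hw
  have e₁ := (P.Pi_append_conjSpread f (u := []) (by simpa using mem_D_of_dvia hD hs)).2
  obtain ⟨hd, e₂⟩ := Pi_append_cons_conjSpread hD (u := [P.inv f, g]) (w := w)
    (by simpa [conjSpread] using hs)
  have e₃ := P.Pi_contract [P.inv f] (g :: w) [f] (by simpa using mem_D_of_dvia hD hd)
  simp only [conjSpread, List.nil_append, List.flatMap_cons, List.cons_append] at e₁ e₂ e₃
  rw [cnj, ← e₃, ← e₂, e₁]

end DeltaDomain

section Normalizer

variable {L : Type u} {P : PartialGroup L} {Δ : Set (Set L)}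

lemma PartialGroup.IsSubgroup.subset_NL {Q : Set L} (hQ : P.IsSubgroup Q) : Q ⊆ NL P Q := by
  obtain ⟨⟨-, hinv, hPi⟩, hD⟩ := hQ
  have hcnj : ∀ q ∈ Q, ∀ x ∈ Q, P.memD q x ∧ P.cnj q x ∈ Q := fun q hq x hx =>
    have hw : ∀ y ∈ [P.inv q, x, q], y ∈ Q := by simp [hinv q hq, hx, hq]
    ⟨hD _ hw, hPi _ (hD _ hw) hw⟩
  refine fun q hq => ⟨fun x hx => (hcnj q hq x hx).1, ?_⟩
  refine Set.Subset.antisymm (Set.image_subset_iff.2 fun x hx => (hcnj q hq x hx).2) fun y hy => ?_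
  obtain ⟨hmem, hy'⟩ := hcnj _ (hinv q hq) y hy
  refine ⟨_, hy', ?_⟩
  simpa using (P.memD_inv_cnj_and_cnj_inv_cnj hmem).2

lemma memD_of_mem_NL (hD : P.D = {w | ∃ Q, Dvia P Δ w Q}) {f g : L} {Q : Set L}
    (hQ : Q ∈ Δ) (hf : ∀ x ∈ Q, P.memD f x) (hQf : P.cnj f '' Q ∈ Δ) (hg : g ∈ NL P Q) :
    P.memD f g := by
  have h := dvia_conjSpread (w := [g]) hQ hf hQf (by simpa using hg)
  simpa [conjSpread, memD] using mem_D_of_dvia hD h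

lemma cnj_cnj_of_mem_NL (hΔ : ∀ Q ∈ Δ, P.IsSubgroup Q) (hD : P.D = {w | ∃ Q, Dvia P Δ w Q})
    {f g x : L} {Q : Set L} (hQ : Q ∈ Δ) (hf : ∀ y ∈ Q, P.memD f y)
    (hQf : P.cnj f '' Q ∈ Δ) (hg : g ∈ NL P Q) (hx : x ∈ Q) :
    P.memD (P.cnj f g) (P.cnj f x) ∧ P.cnj (P.cnj f g) (P.cnj f x) = P.cnj f (P.cnj g x) := by
  have hw : ∀ y ∈ [P.inv g, x, g], y ∈ NL P Q := by
    simp [inv_mem_NL hg, (hΔ Q hQ).subset_NL hx, hg]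
  have hmem := map_cnj_mem_D hD hQ hf hQf hw
  have e := cnj_Pi_eq_Pi_map_cnj hD hQ hf hQf hw
  simp only [List.map_cons, List.map_nil, ← P.inv_cnj (memD_of_mem_NL hD hQ hf hQf hg)] at hmem e
  exact ⟨hmem, e.symm⟩

lemma cnj_mem_NL (hΔ : ∀ Q ∈ Δ, P.IsSubgroup Q) (hD : P.D = {w | ∃ Q, Dvia P Δ w Q})
    {f g : L} {Q : Set L} (hQ : Q ∈ Δ) (hf : ∀ x ∈ Q, P.memD f x) (hQf : P.cnj f '' Q ∈ Δ)
    (hg : g ∈ NL P Q) : P.cnj f g ∈ NL P (P.cnj f '' Q) := by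
  refine ⟨?_, ?_⟩
  · rintro _ ⟨x, hx, rfl⟩
    exact (cnj_cnj_of_mem_NL hΔ hD hQ hf hQf hg hx).1
  · rw [Set.image_image, Set.image_congr fun x hx => (cnj_cnj_of_mem_NL hΔ hD hQ hf hQf hg hx).2,
      ← Set.image_image, hg.2]

lemma bijOn_cnj_NL (hΔ : ∀ Q ∈ Δ, P.IsSubgroup Q) (hD : P.D = {w | ∃ Q, Dvia P Δ w Q})
    {f : L} {Q : Set L} (hQ : Q ∈ Δ) (hf : ∀ x ∈ Q, P.memD f x) (hQf : P.cnj f '' Q ∈ Δ) :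
    Set.BijOn (P.cnj f) (NL P Q) (NL P (P.cnj f '' Q)) := by
  obtain ⟨hf', hback⟩ := P.cnj_inv_image hf
  have hQ' : P.cnj (P.inv f) '' (P.cnj f '' Q) ∈ Δ := by rwa [hback]
  refine Set.InvOn.bijOn (f' := P.cnj (P.inv f)) ⟨fun g hg => ?_, fun g hg => ?_⟩
    (fun g hg => cnj_mem_NL hΔ hD hQ hf hQf hg)
    (fun g hg => hback ▸ cnj_mem_NL hΔ hD hQf hf' hQ' hg)
  · exact (P.memD_inv_cnj_and_cnj_inv_cnj (memD_of_mem_NL hD hQ hf hQf hg)).2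
  · simpa using (P.memD_inv_cnj_and_cnj_inv_cnj (memD_of_mem_NL hD hQf hf' hQ' hg)).2

lemma Pi_wInv_append_cons (hΔ : ∀ Q ∈ Δ, P.IsSubgroup Q)
    (hD : P.D = {w | ∃ Q, Dvia P Δ w Q}) {w : List L} {g : L} {Q : Set L} (h : Dvia P Δ w Q)
    (hg : g ∈ NL P Q) :
    P.Pi (P.wInv w ++ g :: w) = w.foldl (fun y f => P.cnj f y) g := by
  induction w generalizing Q g with
  | nil => simp
  | cons f w ih =>
    obtain ⟨hQ, hf, hw⟩ := h
    have hmem : P.wInv w ++ [P.inv f, g, f] ++ w ∈ P.D := by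
      simpa using mem_D_of_dvia hD (Dvia.wInv_append_cons (w := f :: w) ⟨hQ, hf, hw⟩ hg)
    have e := P.Pi_contract _ _ _ hmem
    simp only [wInv_cons, List.append_assoc, List.cons_append, List.nil_append] at e ⊢
    rw [e]
    exact ih hw (cnj_mem_NL hΔ hD hQ hf hw.start_mem hg)

lemma cnj_Pi_of_dvia (hΔ : ∀ Q ∈ Δ, P.IsSubgroup Q) (hD : P.D = {w | ∃ Q, Dvia P Δ w Q})
    {w : List L} {g : L} {Q : Set L} (h : Dvia P Δ w Q) (hg : g ∈ NL P Q) :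
    P.memD (P.Pi w) g ∧ P.cnj (P.Pi w) g = w.foldl (fun y f => P.cnj f y) g := by
  obtain ⟨hmem, e⟩ := P.memD_Pi_and_cnj_Pi (mem_D_of_dvia hD (h.wInv_append_cons hg))
  exact ⟨hmem, e.trans (Pi_wInv_append_cons hΔ hD h hg)⟩

lemma isSubgroup_NL (hΔ : ∀ Q ∈ Δ, P.IsSubgroup Q) (hD : P.D = {w | ∃ Q, Dvia P Δ w Q})
    {Q : Set L} (hQ : Q ∈ Δ) : P.IsSubgroup (NL P Q) := by
  have hQN := (hΔ Q hQ).subset_NL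
  refine ⟨⟨(hΔ Q hQ).1.1.mono hQN, fun g => inv_mem_NL, fun w _ hw => ?_⟩,
    fun w hw => mem_D_of_dvia hD (dvia_of_forall_mem_NL hQ hw)⟩
  have h := dvia_of_forall_mem_NL (Δ := Δ) hQ hw
  refine ⟨fun x hx => (cnj_Pi_of_dvia hΔ hD h (hQN hx)).1, ?_⟩
  rw [Set.image_congr fun x hx => (cnj_Pi_of_dvia hΔ hD h (hQN hx)).2, image_foldl_cnj,
    chainEnd_of_forall_mem_NL hw]

end Normalizer

theorem stmt18 {L : Type u} (P : PartialGroup L) (Δ : Set (Set L))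
    (hΔ : ∀ Q ∈ Δ, P.IsSubgroup Q)
    (hD : P.D = {w | ∃ Q, Dvia P Δ w Q}) (Q : Set L) (hQ : Q ∈ Δ) :
    P.IsSubgroup (NL P Q) ∧
    (∀ f : L, (∀ x ∈ Q, P.memD f x) → P.cnj f '' Q ∈ Δ →
      (∀ g ∈ NL P Q, P.memD f g) ∧
      Set.BijOn (P.cnj f) (NL P Q) (NL P (P.cnj f '' Q)) ∧
      (∀ g ∈ NL P Q, ∀ g' ∈ NL P Q,
        P.cnj f (P.Pi [g, g']) = P.Pi [P.cnj f g, P.cnj f g'])) ∧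
    (∀ w : List L, ∀ R : Set L, Dvia P Δ w R →
      ∀ g ∈ NL P R, P.cnj (P.Pi w) g = w.foldl (fun y f => P.cnj f y) g) := by
  refine ⟨isSubgroup_NL hΔ hD hQ, fun f hf hQf => ⟨fun g => memD_of_mem_NL hD hQ hf hQf,
    bijOn_cnj_NL hΔ hD hQ hf hQf, fun g hg g' hg' => ?_⟩,
    fun w R h g hg => (cnj_Pi_of_dvia hΔ hD h hg).2⟩
  exact cnj_Pi_eq_Pi_map_cnj hD hQ hf hQf (by simp [hg, hg'])
end
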